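/- arXiv:2107.06331 — 2 statements merged into one kernel-verified Lean document; each statement's English description precedes it below -/
import Mathlib

section
/- Let G be a congestion game with incentives and at most n users, and suppose there exist ζ > 0, λ > 0 and μ < 1 such that for every pair of assignments a, a' ∈ A: SC(a) + Σ_{i=1}^n [C_i(a'_i, a_{−i}) − C_i(a)] + ζ[Φ(a') − Φ(a)] ≤ λ SC(a') + μ SC(a). Then for every optimal assignment a* (i.e. SC(a*) = MinCost(G)) and every pure Nash equilibrium ā with Φ(ā) ≤ Φ(a*), it holds that SC(ā) ≤ (λ/(1−μ)) · SC(a*). -/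
open scoped BigOperators ENNReal

noncomputable section

/-- A congestion game with incentives: `n` users, `R` resources,
finite nonempty action sets `act i ⊆ 2^E`, resource cost functions `cost e`
and incentive functions `tax e`. -/
structure CGame where
  n : ℕ
  R : ℕ
  act : Fin n → Finset (Finset (Fin R))
  act_ne : ∀ i, (act i).Nonempty
  cost : Fin R → ℕ → ℝ
  tax : Fin R → ℕ → ℝ

namespace CGame

variable (G : CGame)

/-- An assignment of actions (not necessarily feasible). -/
abbrev Assign := Fin G.n → Finset (Fin G.R)

/-- Feasibility of an assignment. -/
def IsAssign (a : G.Assign) : Prop := ∀ i, a i ∈ G.act i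

/-- The load `|a|_e`: the number of users selecting resource `e`. -/
def load (a : G.Assign) (e : Fin G.R) : ℕ :=
  (Finset.univ.filter fun i => e ∈ a i).card

/-- The social cost `SC(a)`. -/
def SC (a : G.Assign) : ℝ := ∑ i, ∑ e ∈ a i, G.cost e (G.load a e)

/-- The cost `C_i(a)` experienced by user `i` (resource costs plus incentives). -/
def userCost (i : Fin G.n) (a : G.Assign) : ℝ :=
  ∑ e ∈ a i, (G.cost e (G.load a e) + G.tax e (G.load a e))

/-- Pure Nash equilibrium. -/
def IsNE (a : G.Assign) : Prop :=
  G.IsAssign a ∧ ∀ i : Fin G.n, ∀ s ∈ G.act i,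
    G.userCost i a ≤ G.userCost i (Function.update a i s)

/-- The Rosenthal potential of the game with incentives. -/
def potential (a : G.Assign) : ℝ :=
  ∑ e, ∑ k ∈ Finset.Icc 1 (G.load a e), (G.cost e k + G.tax e k)

/-- The minimum achievable social cost. -/
def MinCost : ℝ := sInf {c | ∃ a, G.IsAssign a ∧ G.SC a = c}

end CGame

namespace CGame

theorem IsNE.sum_userCost_update_sub_nonneg {G : CGame} {a : G.Assign} (ha : G.IsNE a)
    {a' : G.Assign} (ha' : G.IsAssign a') :
    0 ≤ ∑ i, (G.userCost i (Function.update a i (a' i)) - G.userCost i a) :=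
  Finset.sum_nonneg fun i _ => sub_nonneg.2 (ha.2 i (a' i) (ha' i))

end CGame

theorem smoothness_single_game_general (G : CGame)
    (zeta lam mu : ℝ) (hzeta : 0 < zeta) (hmu : mu < 1)
    (hsmooth : ∀ a a' : G.Assign, G.IsAssign a → G.IsAssign a' →
      G.SC a + (∑ i, (G.userCost i (Function.update a i (a' i)) - G.userCost i a))
          + zeta * (G.potential a' - G.potential a)
        ≤ lam * G.SC a' + mu * G.SC a) :
    ∀ astar : G.Assign, G.IsAssign astar → G.SC astar = G.MinCost →
      ∀ abar : G.Assign, G.IsNE abar → G.potential abar ≤ G.potential astar →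
        G.SC abar ≤ (lam / (1 - mu)) * G.SC astar := by
  intro astar hstar _ abar hNE hpot
  have hdev := hNE.sum_userCost_update_sub_nonneg hstar
  have hpot_term : 0 ≤ zeta * (G.potential astar - G.potential abar) :=
    mul_nonneg hzeta.le (sub_nonneg.2 hpot)
  have key : (1 - mu) * G.SC abar ≤ lam * G.SC astar := by
    linarith [hsmooth abar astar hNE.1 hstar]
  rw [div_mul_eq_mul_div, le_div_iff₀ (sub_pos.2 hmu)]
  linarith

/-- If a congestion game with incentives and at most `n` users
satisfies the generalized smoothness condition with parameters `ζ > 0`,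
`λ > 0`, `μ < 1`, then for every optimal assignment `a*` and every pure Nash
equilibrium `ā` with `Φ(ā) ≤ Φ(a*)`, we have `SC(ā) ≤ (λ/(1−μ))·SC(a*)`. -/
theorem smoothness_single_game (n : ℕ) (G : CGame) (hGn : G.n ≤ n)
    (zeta lam mu : ℝ) (hzeta : 0 < zeta) (hlam : 0 < lam) (hmu : mu < 1)
    (hsmooth : ∀ a a' : G.Assign, G.IsAssign a → G.IsAssign a' →
      G.SC a + (∑ i, (G.userCost i (Function.update a i (a' i)) - G.userCost i a))
          + zeta * (G.potential a' - G.potential a)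
        ≤ lam * G.SC a' + mu * G.SC a) :
    ∀ astar : G.Assign, G.IsAssign astar → G.SC astar = G.MinCost →
      ∀ abar : G.Assign, G.IsNE abar → G.potential abar ≤ G.potential astar →
        G.SC abar ≤ (lam / (1 - mu)) * G.SC astar :=
  smoothness_single_game_general G zeta lam mu hzeta hmu hsmooth
end
end

section
/- Consider the set 𝒢 of congestion games with at most n users and resource cost functions in 𝓛 for convex, nondecreasing basis functions b_1,…,b_m. For every local incentive mechanism T, the linear local mechanism T' defined by T'(Σ_{j=1}^m α_j b_j) = Σ_{j=1}^m α_j T(b_j) satisfies PoA(T') ≤ PoA(T) and PoS(T') ≤ PoS(T). Consequently, any mechanism that is Pareto optimal with respect to the pair (PoA, PoS) within the set of linear local mechanisms is Pareto optimal over all local mechanisms. -/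
open scoped BigOperators ENNReal

noncomputable section

/-- A (local) incentive mechanism: a map from resource cost functions to
incentive functions. -/
abbrev Mech : Type := (ℕ → ℝ) → (ℕ → ℝ)

/-- Membership of a game in the class `𝒢` of congestion games with at most `n`
users, resource cost functions that are nonnegative linear combinations of the
basis functions `b`, and incentives generated by the mechanism `T`. -/
def InClass (n m : ℕ) (b : Fin m → ℕ → ℝ) (T : Mech) (G : CGame) : Prop :=
  G.n ≤ n ∧
  (∀ e, ∃ α : Fin m → ℝ, (∀ j, 0 ≤ α j) ∧ ∀ x, G.cost e x = ∑ j, α j * b j x) ∧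
  (∀ e x, G.tax e x = T (G.cost e) x)

/-- Price of anarchy of mechanism `T` over the class of congestion games with
at most `n` users and costs generated by the basis `b`. -/
def PoA (n m : ℕ) (b : Fin m → ℕ → ℝ) (T : Mech) : ℝ≥0∞ :=
  ⨆ G : CGame, ⨆ _ : InClass n m b T G ∧ 0 < G.MinCost,
    ⨆ a : G.Assign, ⨆ _ : G.IsNE a, ENNReal.ofReal (G.SC a / G.MinCost)

/-- Price of stability of mechanism `T` over the class of congestion games with
at most `n` users and costs generated by the basis `b`. -/
def PoS (n m : ℕ) (b : Fin m → ℕ → ℝ) (T : Mech) : ℝ≥0∞ :=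
  ⨆ G : CGame, ⨆ _ : InClass n m b T G ∧ 0 < G.MinCost,
    ⨅ a : {a : G.Assign // G.IsNE a}, ENNReal.ofReal (G.SC a.1 / G.MinCost)

/-- The marginal cost mechanism `T^mc(ℓ)(x) = (x−1)·[ℓ(x) − ℓ(x−1)]`. -/
def Tmc : Mech := fun ℓ x => ((x : ℝ) - 1) * (ℓ x - ℓ (x - 1))

/-- A mechanism is linear (w.r.t. the basis `b`) if
`T(Σ_j α_j b_j) = Σ_j α_j T(b_j)` for all nonnegative coefficients. -/
def IsLinear (m : ℕ) (b : Fin m → ℕ → ℝ) (T : Mech) : Prop :=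
  ∀ α : Fin m → ℝ, (∀ j, 0 ≤ α j) →
    ∀ x, T (fun y => ∑ j, α j * b j y) x = ∑ j, α j * T (b j) x

/-- `T` (strictly Pareto-) dominates `T'` with respect to `(PoA, PoS)`. -/
def Dominates (n m : ℕ) (b : Fin m → ℕ → ℝ) (T T' : Mech) : Prop :=
  PoA n m b T ≤ PoA n m b T' ∧ PoS n m b T ≤ PoS n m b T' ∧
    (PoA n m b T < PoA n m b T' ∨ PoS n m b T < PoS n m b T')


/-!
A game in the class of the linearization `T'` of `T` has resource costs `∑ j, w e j • b j` with
real weights `w ≥ 0` and incentives `∑ j, w e j • T (b j)`. As `T` is not linear, only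
unit-weight resources of cost `b j` can be reproduced in the class of `T`: a resource with
natural weights `c e j` is replaced by `c e j` copies of cost `b j`, which changes nothing for
the players. Rounding `q • w` up to natural numbers therefore yields games in the class of `T`
whose costs are `q` times the original ones up to errors bounded independently of `q`, so that
their cost ratios converge as `q → ∞`.

For the price of stability it suffices that, for `q` large, every equilibrium of the rounded
game is an equilibrium of the original one. For the price of anarchy a given equilibrium `a`
has to survive the rounding. This is enforced by an extra "star" resource per player, carried
by `k₀ - 1` other players, which she uses exactly when deviating from `a` (or exactly when
playing `a`, according to the sign of a nonzero per-user cost `b j₀ k₀ + T (b j₀) k₀`): with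
a large weight it outweighs every rounding error, while its share of the social cost does not
grow with `q`.

The Pareto statement follows because the linearization of a mechanism is linear.
-/

open Finset Filter Function

/-- `CGame.load` as a function of the assignment alone, to compare loads across games. -/
def loadOf {K R : ℕ} (a : Fin K → Finset (Fin R)) (e : Fin R) : ℕ :=
  #(univ.filter fun i => e ∈ a i)

section Load

variable {K R : ℕ}

theorem loadOf_mem_Icc {a : Fin K → Finset (Fin R)} {i : Fin K} {e : Fin R} (h : e ∈ a i) :
    loadOf a e ∈ Icc 1 K :=
  mem_Icc.2 ⟨card_pos.2 ⟨i, by simpa using h⟩, (card_filter_le _ _).trans_eq (card_fin K)⟩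

theorem loadOf_update (a : Fin K → Finset (Fin R)) (i : Fin K) (t : Finset (Fin R))
    (e : Fin R) :
    loadOf (update a i t) e =
      #((univ.erase i).filter fun i' => e ∈ a i') + if e ∈ t then 1 else 0 := by
  rw [loadOf, card_filter, card_filter, ← add_sum_erase _ _ (mem_univ i), update_self, add_comm]
  congr 1
  exact sum_congr rfl fun i' hi' => by rw [update_of_ne (ne_of_mem_erase hi')]

end Load

namespace CGame

variable (G : CGame)

theorem load_eq_loadOf (a : G.Assign) (e : Fin G.R) : G.load a e = loadOf a e := rfl

theorem exists_isAssign : ∃ a, G.IsAssign a :=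
  ⟨fun i => (G.act_ne i).choose, fun i => (G.act_ne i).choose_spec⟩

theorem finite_SC_image : {c | ∃ a, G.IsAssign a ∧ G.SC a = c}.Finite :=
  (Set.finite_range G.SC).subset fun _ ⟨a, _, h⟩ => ⟨a, h⟩

theorem minCost_le {a : G.Assign} (h : G.IsAssign a) : G.MinCost ≤ G.SC a :=
  csInf_le G.finite_SC_image.bddBelow ⟨a, h, rfl⟩

theorem exists_SC_eq_minCost : ∃ a, G.IsAssign a ∧ G.SC a = G.MinCost := by
  obtain ⟨a, ha⟩ := G.exists_isAssign
  exact Set.Nonempty.csInf_mem (s := {c | ∃ a, G.IsAssign a ∧ G.SC a = c}) ⟨_, a, ha, rfl⟩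
    G.finite_SC_image

theorem abs_minCost_sub_le {G' : CGame} (Φ : G.Assign → G'.Assign)
    (hΦ : ∀ a', G'.IsAssign a' ↔ ∃ a, G.IsAssign a ∧ Φ a = a') {q C : ℝ} (hq : 0 ≤ q)
    (hSC : ∀ a, G.IsAssign a → |G'.SC (Φ a) - q * G.SC a| ≤ C) :
    |G'.MinCost - q * G.MinCost| ≤ C := by
  obtain ⟨a, ha, hopt⟩ := G.exists_SC_eq_minCost
  obtain ⟨a', ha', hopt'⟩ := G'.exists_SC_eq_minCost
  obtain ⟨a', ha'', rfl⟩ := (hΦ a').1 ha'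
  have hup := G'.minCost_le ((hΦ _).2 ⟨a, ha, rfl⟩)
  have hdown := mul_le_mul_of_nonneg_left (G.minCost_le ha'') hq
  have h := abs_le.1 (hSC a ha)
  have h' := abs_le.1 (hSC a' ha'')
  rw [hopt] at h
  rw [abs_le]
  constructor <;> linarith

/-- The first summand does not depend on `t`: Rosenthal's potential changes exactly as the cost
of a user who changes her action. -/
theorem potential_update (a : G.Assign) (i : Fin G.n) (t : Finset (Fin G.R)) :
    G.potential (update a i t) =
      (∑ e, ∑ k ∈ Icc 1 #((univ.erase i).filter fun i' => e ∈ a i'),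
          (G.cost e k + G.tax e k))
        + G.userCost i (update a i t) := by
  have hstep : ∀ e (l : ℕ),
      ∑ k ∈ Icc 1 (l + if e ∈ t then 1 else 0), (G.cost e k + G.tax e k) =
        (∑ k ∈ Icc 1 l, (G.cost e k + G.tax e k))
          + if e ∈ t then G.cost e (l + 1) + G.tax e (l + 1) else 0 := fun e l => by
    split_ifs <;> simp [sum_Icc_succ_top]
  have hown : G.userCost i (update a i t) = ∑ e ∈ t,
      (G.cost e (#((univ.erase i).filter fun i' => e ∈ a i') + 1)
        + G.tax e (#((univ.erase i).filter fun i' => e ∈ a i') + 1)) :=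
    sum_congr (update_self ..) fun e he => by simp [load_eq_loadOf, loadOf_update, he]
  simp only [potential, load_eq_loadOf, loadOf_update, hstep, hown]
  rw [sum_add_distrib, sum_ite_mem, univ_inter]

theorem exists_isNE : ∃ a, G.IsNE a := by
  obtain ⟨a₀, ha₀⟩ := G.exists_isAssign
  obtain ⟨a, ha, hmin⟩ :=
    Set.exists_min_image {a | G.IsAssign a} G.potential (Set.toFinite _) ⟨a₀, ha₀⟩
  refine ⟨a, ha, fun i s hs => ?_⟩
  have hfeas : G.IsAssign (update a i s) := fun i' => by
    rcases eq_or_ne i' i with rfl | h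
    · simpa using hs
    · simpa [update_of_ne h] using ha i'
  have h₁ := G.potential_update a i s
  have h₂ := G.potential_update a i (a i)
  rw [update_eq_self] at h₂
  linarith [hmin _ hfeas]

end CGame

section Class

variable {n m : ℕ} {b : Fin m → ℕ → ℝ} {T : Mech} {G : CGame}

theorem ofReal_SC_div_minCost_le_PoA (hG : InClass n m b T G) (hpos : 0 < G.MinCost)
    {a : G.Assign} (ha : G.IsNE a) : ENNReal.ofReal (G.SC a / G.MinCost) ≤ PoA n m b T :=
  le_iSup_of_le G <| le_iSup_of_le ⟨hG, hpos⟩ <| le_iSup_of_le a <| le_iSup_of_le ha le_rfl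

theorem le_PoS (hG : InClass n m b T G) (hpos : 0 < G.MinCost) {y : ℝ≥0∞}
    (hy : ∀ a, G.IsNE a → y ≤ ENNReal.ofReal (G.SC a / G.MinCost)) : y ≤ PoS n m b T :=
  le_iSup_of_le G <| le_iSup_of_le ⟨hG, hpos⟩ <| le_iInf fun a => hy a.1 a.2

end Class

section Limit

theorem div_le_div_of_abs_sub_le {q A B C x M : ℝ} (hM : |M - q * B| ≤ C) (hC : C < q * B)
    (hx : q * A - C ≤ x) (hMx : M ≤ x) : (q * A - C) / (q * B + C) ≤ x / M := by
  obtain ⟨h₁, h₂⟩ := abs_le.1 hM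
  exact div_le_div₀ (by linarith) hx (by linarith) (by linarith)

theorem ofReal_div_le_of_eventually {A B C : ℝ} (hB : 0 < B) {y : ℝ≥0∞}
    (h : ∀ᶠ q : ℕ in atTop, C < q * B → ENNReal.ofReal ((q * A - C) / (q * B + C)) ≤ y) :
    ENNReal.ofReal (A / B) ≤ y := by
  have hC := tendsto_const_div_atTop_nhds_zero_nat (𝕜 := ℝ) C
  have hlim : Tendsto (fun q : ℕ => (q * A - C) / (q * B + C)) atTop (nhds (A / B)) := by
    have := ((tendsto_const_nhds (x := A)).sub hC).div ((tendsto_const_nhds (x := B)).add hC)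
      (by simpa using hB.ne')
    rw [sub_zero, add_zero] at this
    refine this.congr' ((eventually_ne_atTop 0).mono fun q hq => ?_)
    have hq : (q : ℝ) ≠ 0 := Nat.cast_ne_zero.2 hq
    rw [Pi.div_apply, sub_div' hq, add_div' _ _ _ hq, div_div_div_cancel_right₀ hq, mul_comm A,
      mul_comm B]
  refine le_of_tendsto ((ENNReal.continuous_ofReal.tendsto _).comp hlim) ?_
  filter_upwards [h, (tendsto_natCast_atTop_atTop.atTop_mul_const hB).eventually_gt_atTop C]
    with q hq hqC using hq hqC

end Limit

section Weighted

variable {m K R : ℕ} (b : Fin m → ℕ → ℝ) (T : Mech)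

def perceivedCost (j : Fin m) (k : ℕ) : ℝ := b j k + T (b j) k

variable {b T}

def weightedSum {ι : Type*} (w : ι → Fin m → ℝ) (f : Fin m → ℕ → ℝ) (L : ι → ℕ)
    (s : Finset ι) : ℝ :=
  ∑ e ∈ s, ∑ j, w e j * f j (L e)

def absSum {ι : Type*} (f : Fin m → ℕ → ℝ) (L : ι → ℕ) (s : Finset ι) : ℝ :=
  ∑ e ∈ s, ∑ j, |f j (L e)|

theorem abs_weightedSum_sub_le {ι : Type*} {u w : ι → Fin m → ℝ} {q : ℝ}
    (h : ∀ e j, |u e j - q * w e j| ≤ 1) (f : Fin m → ℕ → ℝ) (L : ι → ℕ)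
    (s : Finset ι) :
    |weightedSum u f L s - q * weightedSum w f L s| ≤ absSum f L s := by
  have hdiff : weightedSum u f L s - q * weightedSum w f L s =
      ∑ e ∈ s, ∑ j, (u e j - q * w e j) * f j (L e) := by
    simp only [weightedSum, mul_sum, ← sum_sub_distrib, sub_mul, mul_assoc]
  rw [hdiff]
  refine (abs_sum_le_sum_abs _ _).trans <| sum_le_sum fun e _ =>
    (abs_sum_le_sum_abs _ _).trans <| sum_le_sum fun j _ => ?_
  rw [abs_mul]
  exact mul_le_of_le_one_left (abs_nonneg _) (h e j)

theorem absSum_eq_zero {f : Fin m → ℕ → ℝ} (hf : ∀ j, ∀ k ∈ Icc 1 K, f j k = 0)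
    (a : Fin K → Finset (Fin R)) (i : Fin K) : absSum f (loadOf a) (a i) = 0 :=
  sum_eq_zero fun _ he => sum_eq_zero fun j _ => by rw [hf j _ (loadOf_mem_Icc he), abs_zero]

/-- Bounds the rounding error in the change of cost of player `i` deviating from `a` to `s`. -/
def deviationError (f : Fin m → ℕ → ℝ) (a : Fin K → Finset (Fin R)) (i : Fin K)
    (s : Finset (Fin R)) : ℝ :=
  absSum f (loadOf (update a i s)) s + absSum f (loadOf a) (a i)

variable (b T)

/-- The games of the class of the linearization of `T`. -/
abbrev weightedGame (act : Fin K → Finset (Finset (Fin R))) (hne : ∀ i, (act i).Nonempty)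
    (w : Fin R → Fin m → ℝ) : CGame :=
  ⟨K, R, act, hne, fun e x => ∑ j, w e j * b j x, fun e x => ∑ j, w e j * T (b j) x⟩

abbrev natWeightedGame (act : Fin K → Finset (Finset (Fin R))) (hne : ∀ i, (act i).Nonempty)
    (c : Fin R → Fin m → ℕ) : CGame :=
  weightedGame b T act hne fun e j => (c e j : ℝ)

variable {b T} {act : Fin K → Finset (Finset (Fin R))} {hne : ∀ i, (act i).Nonempty}

theorem userCost_weightedGame (w : Fin R → Fin m → ℝ) (i : Fin K)
    (a : Fin K → Finset (Fin R)) :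
    (weightedGame b T act hne w).userCost i a =
      weightedSum w (perceivedCost b T) (loadOf a) (a i) := by
  simp only [CGame.userCost, weightedGame, weightedSum, perceivedCost, ← sum_add_distrib,
    mul_add]
  rfl

theorem SC_weightedGame (w : Fin R → Fin m → ℝ) (a : Fin K → Finset (Fin R)) :
    (weightedGame b T act hne w).SC a = ∑ i, weightedSum w b (loadOf a) (a i) := rfl

def roundUp (w : Fin R → Fin m → ℝ) (q : ℕ) (e : Fin R) (j : Fin m) : ℕ :=
  ⌈(q : ℝ) * w e j⌉₊

variable {w : Fin R → Fin m → ℝ}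

theorem abs_roundUp_sub_le (hw : ∀ e j, 0 ≤ w e j) (q : ℕ) (e : Fin R) (j : Fin m) :
    |(roundUp w q e j : ℝ) - q * w e j| ≤ 1 := by
  have h₀ : 0 ≤ (q : ℝ) * w e j := mul_nonneg q.cast_nonneg (hw e j)
  rw [roundUp, abs_le]
  constructor <;> linarith [Nat.le_ceil ((q : ℝ) * w e j), Nat.ceil_lt_add_one h₀]

theorem abs_userCost_update_sub_le (hw : ∀ e j, 0 ≤ w e j) (q : ℕ)
    (a : Fin K → Finset (Fin R)) (i : Fin K) (s : Finset (Fin R)) :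
    |((natWeightedGame b T act hne (roundUp w q)).userCost i (update a i s)
        - (natWeightedGame b T act hne (roundUp w q)).userCost i a)
      - q * ((weightedGame b T act hne w).userCost i (update a i s)
        - (weightedGame b T act hne w).userCost i a)| ≤
      deviationError (perceivedCost b T) a i s := by
  have hround := fun a' : Fin K → Finset (Fin R) => abs_le.1 <|
    abs_weightedSum_sub_le (abs_roundUp_sub_le hw q) (perceivedCost b T) (loadOf a') (a' i)
  have h₁ := hround (update a i s)
  have h₂ := hround a
  simp only [userCost_weightedGame, deviationError, update_self] at h₁ ⊢
  rw [abs_le]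
  constructor <;> linarith

theorem abs_SC_roundUp_sub_le (hw : ∀ e j, 0 ≤ w e j) (q : ℕ) (a : Fin K → Finset (Fin R)) :
    |(natWeightedGame b T act hne (roundUp w q)).SC a - q * (weightedGame b T act hne w).SC a|
      ≤ ∑ i, absSum b (loadOf a) (a i) := by
  rw [SC_weightedGame, SC_weightedGame, mul_sum, ← sum_sub_distrib]
  exact (abs_sum_le_sum_abs _ _).trans <| sum_le_sum fun i _ =>
    abs_weightedSum_sub_le (abs_roundUp_sub_le hw q) _ _ _

end Weighted

theorem forall_mem_image_iff {K : ℕ} {α β : Type*} [DecidableEq β] (act : Fin K → Finset α)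
    (f : Fin K → α → β) (a' : Fin K → β) :
    (∀ i, a' i ∈ (act i).image (f i)) ↔
      ∃ a : Fin K → α, (∀ i, a i ∈ act i) ∧ (fun i => f i (a i)) = a' := by
  constructor
  · intro h
    choose a ha hfa using fun i => mem_image.1 (h i)
    exact ⟨a, ha, funext hfa⟩
  · rintro ⟨a, ha, rfl⟩ i
    exact mem_image_of_mem _ (ha i)

section Replica

variable {m K R : ℕ} (c : Fin R → Fin m → ℕ)

/-- The `c e j` copies of a resource of cost `b j` that replace resource `e`. -/
abbrev Copy : Type := Σ p : Fin R × Fin m, Fin (c p.1 p.2)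

def copyOf : Fin (Fintype.card (Copy c)) ≃ Copy c := (Fintype.equivFin _).symm

def copies (s : Finset (Fin R)) : Finset (Fin (Fintype.card (Copy c))) :=
  univ.filter fun x => (copyOf c x).1.1 ∈ s

theorem sum_copies (s : Finset (Fin R)) (F : Fin R → Fin m → ℝ) :
    ∑ x ∈ copies c s, F (copyOf c x).1.1 (copyOf c x).1.2 =
      ∑ e ∈ s, ∑ j, (c e j : ℝ) * F e j := by
  rw [copies, sum_filter,
    Equiv.sum_comp (copyOf c) fun y => if y.1.1 ∈ s then F y.1.1 y.1.2 else 0,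
    Fintype.sum_sigma, Fintype.sum_prod_type]
  simp only [sum_const, card_univ, Fintype.card_fin, nsmul_eq_mul, mul_ite, mul_zero]
  simp_rw [sum_ite_irrel, sum_const_zero, sum_ite_mem, univ_inter]

theorem loadOf_copies (a : Fin K → Finset (Fin R)) (x : Fin (Fintype.card (Copy c))) :
    loadOf (fun i => copies c (a i)) x = loadOf a (copyOf c x).1.1 := by
  simp [loadOf, copies]

variable (b : Fin m → ℕ → ℝ) (T : Mech) (act : Fin K → Finset (Finset (Fin R)))
  (hne : ∀ i, (act i).Nonempty)

/-- `natWeightedGame b T act hne c` with every resource replaced by its copies; having unit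
weights, it lies in the class of `T` itself. -/
abbrev replicaGame : CGame :=
  ⟨K, Fintype.card (Copy c), fun i => (act i).image (copies c), fun i => (hne i).image _,
    fun x => b (copyOf c x).1.2, fun x => T (b (copyOf c x).1.2)⟩

variable {b T act hne}

theorem userCost_replicaGame (i : Fin K) (a : Fin K → Finset (Fin R)) :
    (replicaGame c b T act hne).userCost i (fun i => copies c (a i)) =
      (natWeightedGame b T act hne c).userCost i a := by
  rw [userCost_weightedGame, CGame.userCost]
  simp only [CGame.load_eq_loadOf, loadOf_copies]
  exact sum_copies c (a i) fun e j => perceivedCost b T j (loadOf a e)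

theorem SC_replicaGame (a : Fin K → Finset (Fin R)) :
    (replicaGame c b T act hne).SC (fun i => copies c (a i)) =
      (natWeightedGame b T act hne c).SC a := by
  rw [SC_weightedGame, CGame.SC]
  simp only [CGame.load_eq_loadOf, loadOf_copies]
  exact sum_congr rfl fun i _ => sum_copies c (a i) fun e j => b j (loadOf a e)

theorem isNE_replicaGame_iff {a : Fin K → Finset (Fin R)} (ha : ∀ i, a i ∈ act i) :
    (replicaGame c b T act hne).IsNE (fun i => copies c (a i)) ↔
      (natWeightedGame b T act hne c).IsNE a := by
  have hupd : ∀ i s, update (fun i => copies c (a i)) i (copies c s) =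
      fun i' => copies c (update a i s i') := fun i s =>
    funext fun i' => (apply_update (fun _ => copies c) a i s i').symm
  refine ⟨fun h => ⟨ha, fun i s hs => ?_⟩,
    fun h => ⟨fun i => mem_image_of_mem _ (ha i), ?_⟩⟩
  · have := h.2 i (copies c s) (mem_image_of_mem _ hs)
    rwa [hupd, userCost_replicaGame, userCost_replicaGame] at this
  · intro i s' hs'
    obtain ⟨s, hs, rfl⟩ := mem_image.1 hs'
    rw [hupd, userCost_replicaGame, userCost_replicaGame]
    exact h.2 i s hs

theorem minCost_replicaGame :
    (replicaGame c b T act hne).MinCost = (natWeightedGame b T act hne c).MinCost := by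
  have h := CGame.abs_minCost_sub_le (natWeightedGame b T act hne c)
    (G' := replicaGame c b T act hne) (fun a i => copies c (a i))
    (fun a' => forall_mem_image_iff act (fun _ => copies c) a') zero_le_one (C := 0)
    fun a _ => by rw [SC_replicaGame, one_mul, sub_self, abs_zero]
  rwa [one_mul, abs_nonpos_iff, sub_eq_zero] at h

theorem inClass_replicaGame {n : ℕ} (hK : K ≤ n) :
    InClass n m b T (replicaGame c b T act hne) := by
  refine ⟨hK, fun x => ⟨Pi.single (copyOf c x).1.2 1, fun j => ?_, fun y => ?_⟩,
    fun _ _ => rfl⟩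
  · by_cases h : j = (copyOf c x).1.2 <;> simp [h]
  · simp [Pi.single_apply]

theorem ofReal_SC_div_minCost_le_PoA_of_natWeights {n : ℕ} (hK : K ≤ n)
    (hpos : 0 < (natWeightedGame b T act hne c).MinCost) {a : Fin K → Finset (Fin R)}
    (ha : (natWeightedGame b T act hne c).IsNE a) :
    ENNReal.ofReal ((natWeightedGame b T act hne c).SC a
      / (natWeightedGame b T act hne c).MinCost) ≤ PoA n m b T := by
  rw [← SC_replicaGame c, ← minCost_replicaGame c]
  rw [← minCost_replicaGame c] at hpos
  exact ofReal_SC_div_minCost_le_PoA (inClass_replicaGame c hK) hpos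
    ((isNE_replicaGame_iff c ha.1).2 ha)

theorem le_PoS_of_natWeights {n : ℕ} (hK : K ≤ n)
    (hpos : 0 < (natWeightedGame b T act hne c).MinCost) {y : ℝ≥0∞}
    (hy : ∀ a, (natWeightedGame b T act hne c).IsNE a →
      y ≤ ENNReal.ofReal ((natWeightedGame b T act hne c).SC a
        / (natWeightedGame b T act hne c).MinCost)) :
    y ≤ PoS n m b T := by
  rw [← minCost_replicaGame c] at hpos hy
  refine le_PoS (inClass_replicaGame c hK) hpos fun a' ha' => ?_
  obtain ⟨a, ha, rfl⟩ := (forall_mem_image_iff act (fun _ => copies c) a').1 ha'.1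
  rw [SC_replicaGame]
  exact hy a ((isNE_replicaGame_iff c ha).1 ha')

end Replica

section Stars

open scoped Classical

variable {m K R : ℕ} (S : Fin K → Finset (Fin K)) (p : Fin K → Finset (Fin R) → Prop)

/-- Star resources are indexed by the players. Besides `s`, player `i` uses the stars of all
`i'` with `i ∈ S i'`, and her own star iff `p i s`. -/
def starSet (i : Fin K) (s : Finset (Fin R)) : Finset (Fin K) :=
  univ.filter (fun i' => i ∈ S i') ∪ if p i s then {i} else ∅

def starAction (i : Fin K) (s : Finset (Fin R)) : Finset (Fin (R + K)) :=
  (s.disjSum (starSet S p i s)).map finSumFinEquiv.toEmbedding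

def starWeights (c : Fin R → Fin m → ℕ) (cs : Fin m → ℕ) (x : Fin (R + K)) :
    Fin m → ℕ :=
  Sum.elim c (fun _ => cs) (finSumFinEquiv.symm x)

def starCost (cs : Fin m → ℕ) (f : Fin m → ℕ → ℝ) (a : Fin K → Finset (Fin R))
    (i : Fin K) : ℝ :=
  weightedSum (fun _ j => (cs j : ℝ)) f
    (fun i' => loadOf (fun i => starAction S p i (a i)) (Fin.natAdd R i')) (starSet S p i (a i))

def starCostChange (cs : Fin m → ℕ) (f : Fin m → ℕ → ℝ) (i : Fin K)
    (t s : Finset (Fin R)) : ℝ :=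
  (∑ j, (cs j : ℝ) * f j (#(S i) + 1)) * ((if p i s then 1 else 0) - if p i t then 1 else 0)

variable {S p}

theorem mem_starAction_castAdd {i : Fin K} {s : Finset (Fin R)} {e : Fin R} :
    Fin.castAdd K e ∈ starAction S p i s ↔ e ∈ s := by
  simp [starAction]

theorem mem_starAction_natAdd {i i' : Fin K} {s : Finset (Fin R)} :
    Fin.natAdd R i' ∈ starAction S p i s ↔ i ∈ S i' ∨ (i' = i ∧ p i s) := by
  by_cases h : p i s <;> simp [starAction, starSet, h, eq_comm, or_comm]

theorem loadOf_starAction_castAdd (a : Fin K → Finset (Fin R)) (e : Fin R) :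
    loadOf (fun i => starAction S p i (a i)) (Fin.castAdd K e) = loadOf a e := by
  simp only [loadOf, mem_starAction_castAdd]

theorem loadOf_starAction_natAdd_self (hS : ∀ i, i ∉ S i) {a : Fin K → Finset (Fin R)}
    {i : Fin K} (hp : p i (a i)) :
    loadOf (fun i => starAction S p i (a i)) (Fin.natAdd R i) = #(S i) + 1 := by
  have : univ.filter (fun i' => Fin.natAdd R i ∈ starAction S p i' (a i')) = insert i (S i) := by
    ext i'
    rcases eq_or_ne i' i with rfl | h
    · simp [mem_starAction_natAdd, hp]
    · simp [mem_starAction_natAdd, h, Ne.symm h]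
  rw [loadOf, this, card_insert_of_notMem (hS i)]

theorem loadOf_starAction_natAdd_update (a : Fin K → Finset (Fin R)) {i i' : Fin K}
    (h : i' ≠ i) (s : Finset (Fin R)) :
    loadOf (fun i'' => starAction S p i'' (update a i s i'')) (Fin.natAdd R i') =
      loadOf (fun i'' => starAction S p i'' (a i'')) (Fin.natAdd R i') := by
  simp only [loadOf, mem_starAction_natAdd]
  congr 1
  refine filter_congr fun i'' _ => ?_
  rcases eq_or_ne i'' i with rfl | h'
  · simp [h]
  · rw [update_of_ne h']

theorem weightedSum_starAction (c : Fin R → Fin m → ℕ) (cs : Fin m → ℕ)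
    (f : Fin m → ℕ → ℝ) (L : Fin (R + K) → ℕ) (i : Fin K) (s : Finset (Fin R)) :
    weightedSum (fun x j => (starWeights c cs x j : ℝ)) f L (starAction S p i s) =
      weightedSum (fun e j => (c e j : ℝ)) f (fun e => L (Fin.castAdd K e)) s
        + weightedSum (fun _ j => (cs j : ℝ)) f (fun i' => L (Fin.natAdd R i'))
          (starSet S p i s) := by
  simp [weightedSum, starAction, starWeights, sum_disjSum]

theorem starCost_eq (hS : ∀ i, i ∉ S i) (cs : Fin m → ℕ) (f : Fin m → ℕ → ℝ)
    (a : Fin K → Finset (Fin R)) (i : Fin K) :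
    starCost S p cs f a i =
      (∑ i' ∈ univ.filter (fun i' => i ∈ S i'), ∑ j,
          (cs j : ℝ) * f j (loadOf (fun i => starAction S p i (a i)) (Fin.natAdd R i')))
        + if p i (a i) then ∑ j, (cs j : ℝ) * f j (#(S i) + 1) else 0 := by
  rw [starCost, weightedSum, starSet, sum_union]
  · split_ifs with hp
    · simp [loadOf_starAction_natAdd_self hS hp]
    · simp
  · split_ifs
    · simpa using hS i
    · exact disjoint_empty_right _

/-- Only her own star changes the star cost of a deviating player. -/
theorem starCost_update_sub (hS : ∀ i, i ∉ S i) (cs : Fin m → ℕ) (f : Fin m → ℕ → ℝ)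
    (a : Fin K → Finset (Fin R)) (i : Fin K) (s : Finset (Fin R)) :
    starCost S p cs f (update a i s) i - starCost S p cs f a i =
      starCostChange S p cs f i (a i) s := by
  have hcarry : ∀ i' ∈ univ.filter (fun i' => i ∈ S i'), i' ≠ i := fun i' hi' h =>
    hS i (h ▸ (mem_filter.1 hi').2)
  rw [starCost_eq hS, starCost_eq hS, update_self, starCostChange,
    sum_congr rfl fun i' hi' => by rw [loadOf_starAction_natAdd_update a (hcarry i' hi')]]
  split_ifs <;> ring

/-- A star of weight `s₀` on `f j₀` with `f j₀ k₀ ≠ 0`, carried by `k₀ - 1` other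
players, charges a deviation from `a` (if `f j₀ k₀ > 0`) or rewards staying at `a`
(if `f j₀ k₀ < 0`) by `s₀ * |f j₀ k₀|`. -/
theorem exists_starCostChange_ge (f : Fin m → ℕ → ℝ) (a : Fin K → Finset (Fin R))
    (E : ℝ) {j₀ : Fin m} {k₀ : ℕ} (hk₀ : k₀ ∈ Icc 1 K) (hf : f j₀ k₀ ≠ 0) :
    ∃ (S : Fin K → Finset (Fin K)) (p : Fin K → Finset (Fin R) → Prop) (cs : Fin m → ℕ),
      (∀ i, i ∉ S i) ∧ ∀ i s, s ≠ a i → E ≤ starCostChange S p cs f i (a i) s := by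
  obtain ⟨hk₁, hkK⟩ := mem_Icc.1 hk₀
  choose S hSsub hScard using fun i : Fin K => exists_subset_card_eq (s := univ.erase i)
    (n := k₀ - 1) (by rw [card_erase_of_mem (mem_univ i), card_fin]; omega)
  set s₀ := ⌈E / |f j₀ k₀|⌉₊
  have hs₀ : E ≤ s₀ * |f j₀ k₀| := (div_le_iff₀ (abs_pos.2 hf)).1 (Nat.le_ceil _)
  refine ⟨S, fun i s => if 0 < f j₀ k₀ then s ≠ a i else s = a i, Pi.single j₀ s₀,
    fun i hi => by simpa using hSsub i hi, fun i s hs => ?_⟩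
  have hW :
      ∑ j, ((Pi.single j₀ s₀ : Fin m → ℕ) j : ℝ) * f j (#(S i) + 1) = s₀ * f j₀ k₀ := by
    rw [hScard, Nat.sub_add_cancel hk₁]
    simp [Pi.single_apply]
  rw [starCostChange, hW]
  rcases hf.lt_or_gt with hneg | hpos
  · simp only [hneg.not_gt, if_false, hs, if_true, abs_of_neg hneg] at hs₀ ⊢
    linarith
  · simp only [hpos, if_true, ne_eq, hs, not_false_eq_true, not_true_eq_false, if_false,
      abs_of_pos hpos] at hs₀ ⊢
    linarith

theorem exists_deviationError_le_starCostChange (f : Fin m → ℕ → ℝ)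
    (a : Fin K → Finset (Fin R)) :
    ∃ (S : Fin K → Finset (Fin K)) (p : Fin K → Finset (Fin R) → Prop) (cs : Fin m → ℕ),
      (∀ i, i ∉ S i) ∧ ∀ i s, s ≠ a i →
        deviationError f a i s ≤ starCostChange S p cs f i (a i) s := by
  by_cases hf : ∃ j, ∃ k ∈ Icc 1 K, f j k ≠ 0
  · obtain ⟨j₀, k₀, hk₀, hf⟩ := hf
    obtain ⟨E, hE⟩ := Finite.bddAbove_range fun x : Fin K × Finset (Fin R) =>
      deviationError f a x.1 x.2
    obtain ⟨S, p, cs, hS, hgap⟩ := exists_starCostChange_ge f a E hk₀ hf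
    exact ⟨S, p, cs, hS, fun i s hs => (hE ⟨(i, s), rfl⟩).trans (hgap i s hs)⟩
  · -- all rounding errors vanish, and no star is needed
    push Not at hf
    refine ⟨fun _ => ∅, fun _ _ => False, 0, fun _ => notMem_empty _, fun i s _ => ?_⟩
    have h := absSum_eq_zero hf (update a i s) i
    rw [update_self] at h
    simp [deviationError, starCostChange, h, absSum_eq_zero hf a i]

end Stars

section StarGame

open scoped Classical

variable {m K R : ℕ} {b : Fin m → ℕ → ℝ} {T : Mech}
  {act : Fin K → Finset (Finset (Fin R))} {hne : ∀ i, (act i).Nonempty}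
  {S : Fin K → Finset (Fin K)} {p : Fin K → Finset (Fin R) → Prop}

variable (b T act hne S p) in
abbrev starGame (c : Fin R → Fin m → ℕ) (cs : Fin m → ℕ) : CGame :=
  natWeightedGame b T (fun i => (act i).image (starAction S p i)) (fun i => (hne i).image _)
    (starWeights c cs)

theorem userCost_starGame (c : Fin R → Fin m → ℕ) (cs : Fin m → ℕ) (i : Fin K)
    (a : Fin K → Finset (Fin R)) :
    (starGame b T act hne S p c cs).userCost i (fun i => starAction S p i (a i)) =
      (natWeightedGame b T act hne c).userCost i a + starCost S p cs (perceivedCost b T) a i := by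
  rw [userCost_weightedGame, userCost_weightedGame, weightedSum_starAction]
  simp only [loadOf_starAction_castAdd]
  rfl

theorem SC_starGame (c : Fin R → Fin m → ℕ) (cs : Fin m → ℕ)
    (a : Fin K → Finset (Fin R)) :
    (starGame b T act hne S p c cs).SC (fun i => starAction S p i (a i)) =
      (natWeightedGame b T act hne c).SC a + ∑ i, starCost S p cs b a i := by
  rw [SC_weightedGame, SC_weightedGame, ← sum_add_distrib]
  simp only [weightedSum_starAction, loadOf_starAction_castAdd]
  rfl

variable {w : Fin R → Fin m → ℝ}

theorem isNE_starGame (hw : ∀ e j, 0 ≤ w e j) (hS : ∀ i, i ∉ S i) {cs : Fin m → ℕ}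
    {a : Fin K → Finset (Fin R)} (ha : (weightedGame b T act hne w).IsNE a)
    (hgap : ∀ i s, s ≠ a i →
      deviationError (perceivedCost b T) a i s ≤
        starCostChange S p cs (perceivedCost b T) i (a i) s)
    (q : ℕ) :
    (starGame b T act hne S p (roundUp w q) cs).IsNE fun i => starAction S p i (a i) := by
  refine ⟨(forall_mem_image_iff _ _ _).2 ⟨a, ha.1, rfl⟩, fun i s' hs' => ?_⟩
  obtain ⟨s, hs, rfl⟩ := mem_image.1 hs'
  rw [← funext (apply_update (fun i => starAction S p i) a i s)]
  rcases eq_or_ne s (a i) with rfl | hsa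
  · rw [update_eq_self]
  have h₁ := abs_le.1 (abs_userCost_update_sub_le (b := b) (T := T) (act := act) (hne := hne)
    hw q a i s)
  have h₂ := mul_le_mul_of_nonneg_left (sub_nonneg.2 (ha.2 i s hs)) q.cast_nonneg
  have h₃ := starCost_update_sub (p := p) hS cs (perceivedCost b T) a i s
  rw [userCost_starGame, userCost_starGame]
  linarith [hgap i s hsa]

theorem exists_abs_SC_starGame_sub_le (hw : ∀ e j, 0 ≤ w e j) (cs : Fin m → ℕ) :
    ∃ C, ∀ (q : ℕ) (a : Fin K → Finset (Fin R)),
      |(starGame b T act hne S p (roundUp w q) cs).SC (fun i => starAction S p i (a i))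
        - q * (weightedGame b T act hne w).SC a| ≤ C := by
  obtain ⟨C, hC⟩ := Finite.bddAbove_range fun a : Fin K → Finset (Fin R) =>
    ∑ i, absSum b (loadOf a) (a i) + |∑ i, starCost S p cs b a i|
  refine ⟨C, fun q a => le_trans ?_ (hC ⟨a, rfl⟩)⟩
  rw [SC_starGame, add_sub_right_comm]
  exact (abs_add_le _ _).trans (add_le_add_left (abs_SC_roundUp_sub_le hw q a) _)

end StarGame

section Approximation

variable {n m K R : ℕ} {b : Fin m → ℕ → ℝ} {T : Mech}
  {act : Fin K → Finset (Finset (Fin R))} {hne : ∀ i, (act i).Nonempty}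
  {w : Fin R → Fin m → ℝ}

theorem ofReal_SC_div_minCost_le_PoA_of_weights (hw : ∀ e j, 0 ≤ w e j) (hK : K ≤ n)
    (hpos : 0 < (weightedGame b T act hne w).MinCost) {a : Fin K → Finset (Fin R)}
    (ha : (weightedGame b T act hne w).IsNE a) :
    ENNReal.ofReal ((weightedGame b T act hne w).SC a / (weightedGame b T act hne w).MinCost)
      ≤ PoA n m b T := by
  obtain ⟨S, p, cs, hS, hgap⟩ := exists_deviationError_le_starCostChange (perceivedCost b T) a
  obtain ⟨C, hC⟩ := exists_abs_SC_starGame_sub_le (b := b) (T := T) (act := act) (hne := hne)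
    (S := S) (p := p) hw cs
  refine ofReal_div_le_of_eventually (C := C) hpos (Eventually.of_forall fun q hq => ?_)
  have hNE := isNE_starGame hw hS ha hgap q
  have hMC := CGame.abs_minCost_sub_le (weightedGame b T act hne w)
    (G' := starGame b T act hne S p (roundUp w q) cs) (fun a i => starAction S p i (a i))
    (fun _ => forall_mem_image_iff _ _ _) q.cast_nonneg fun a _ => hC q a
  refine (ENNReal.ofReal_le_ofReal (div_le_div_of_abs_sub_le hMC hq
    (by linarith [(abs_le.1 (hC q a)).1]) (CGame.minCost_le _ hNE.1))).trans ?_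
  exact ofReal_SC_div_minCost_le_PoA_of_natWeights _ hK (by linarith [(abs_le.1 hMC).1]) hNE

theorem eventually_isNE_of_isNE_roundUp (hw : ∀ e j, 0 ≤ w e j) :
    ∀ᶠ q : ℕ in atTop, ∀ a, (natWeightedGame b T act hne (roundUp w q)).IsNE a →
      (weightedGame b T act hne w).IsNE a := by
  set G := weightedGame b T act hne w
  have hmargin : ∀ a i s, ∀ᶠ q : ℕ in atTop,
      G.userCost i (update a i s) < G.userCost i a →
      deviationError (perceivedCost b T) a i s
        < q * (G.userCost i a - G.userCost i (update a i s)) := fun a i s => by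
    by_cases h : G.userCost i (update a i s) < G.userCost i a
    · filter_upwards [(tendsto_natCast_atTop_atTop.atTop_mul_const
        (sub_pos.2 h)).eventually_gt_atTop _] with q hq using fun _ => hq
    · exact Eventually.of_forall fun _ h' => absurd h' h
  filter_upwards [eventually_all.2 fun a => eventually_all.2 fun i => eventually_all.2 fun s =>
    hmargin a i s] with q hq a ha
  refine ⟨ha.1, fun i s hs => not_lt.1 fun hlt => ?_⟩
  have h₁ := abs_le.1 (abs_userCost_update_sub_le (b := b) (T := T) (act := act) (hne := hne)
    hw q a i s)
  have h₂ := ha.2 i s hs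
  have h₃ := hq a i s hlt
  rw [mul_sub] at h₁ h₃
  linarith

theorem le_PoS_of_weights (hw : ∀ e j, 0 ≤ w e j) (hK : K ≤ n)
    (hpos : 0 < (weightedGame b T act hne w).MinCost) :
    ⨅ a : {a // (weightedGame b T act hne w).IsNE a},
        ENNReal.ofReal ((weightedGame b T act hne w).SC a.1 / (weightedGame b T act hne w).MinCost)
      ≤ PoS n m b T := by
  set G := weightedGame b T act hne w
  obtain ⟨a₀, ha₀⟩ := G.exists_isNE
  obtain ⟨a, ha, hmin⟩ :=
    Set.exists_min_image {a | G.IsNE a} G.SC (Set.toFinite _) ⟨a₀, ha₀⟩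
  obtain ⟨C, hC⟩ := Finite.bddAbove_range fun a : Fin K → Finset (Fin R) =>
    ∑ i, absSum b (loadOf a) (a i)
  have hSC : ∀ (q : ℕ) a,
      |(natWeightedGame b T act hne (roundUp w q)).SC a - q * G.SC a| ≤ C :=
    fun q a => (abs_SC_roundUp_sub_le hw q a).trans (hC ⟨a, rfl⟩)
  refine (iInf_le _ ⟨a, ha⟩).trans (ofReal_div_le_of_eventually (C := C) hpos ?_)
  filter_upwards [eventually_isNE_of_isNE_roundUp hw] with q hNE hq
  have hMC := CGame.abs_minCost_sub_le G (G' := natWeightedGame b T act hne (roundUp w q)) id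
    (fun a' => ⟨fun h => ⟨a', h, rfl⟩, fun ⟨_, h, e⟩ => e ▸ h⟩) q.cast_nonneg
    fun a _ => hSC q a
  refine le_PoS_of_natWeights _ hK (by linarith [(abs_le.1 hMC).1]) fun a' ha' =>
    ENNReal.ofReal_le_ofReal (div_le_div_of_abs_sub_le hMC hq ?_ (CGame.minCost_le _ ha'.1))
  have := mul_le_mul_of_nonneg_left (hmin a' (hNE a' ha')) q.cast_nonneg
  linarith [(abs_le.1 (hSC q a')).1]

end Approximation

def Linearizes (m : ℕ) (b : Fin m → ℕ → ℝ) (T T' : Mech) : Prop :=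
  ∀ α : Fin m → ℝ, (∀ j, 0 ≤ α j) →
    ∀ x, T' (fun y => ∑ j, α j * b j y) x = ∑ j, α j * T (b j) x

namespace Linearizes

variable {n m : ℕ} {b : Fin m → ℕ → ℝ} {T T' : Mech}

theorem isLinear (h : Linearizes m b T T') : IsLinear m b T' := by
  have hb : ∀ j x, T' (b j) x = T (b j) x := fun j x => by
    simpa [Pi.single_apply] using
      h (Pi.single j 1) (fun j' => by by_cases hj : j' = j <;> simp [hj]) x
  intro α hα x
  simp only [h α hα x, hb]

theorem exists_weights (h : Linearizes m b T T') {K R : ℕ}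
    {act : Fin K → Finset (Finset (Fin R))} {hne : ∀ i, (act i).Nonempty}
    {cost tax : Fin R → ℕ → ℝ} (hG : InClass n m b T' ⟨K, R, act, hne, cost, tax⟩) :
    ∃ w : Fin R → Fin m → ℝ, (∀ e j, 0 ≤ w e j) ∧
      cost = (fun e x => ∑ j, w e j * b j x) ∧ tax = fun e x => ∑ j, w e j * T (b j) x := by
  choose w hw hcost using hG.2.1
  have hcost' : cost = fun e x => ∑ j, w e j * b j x := funext₂ hcost
  refine ⟨w, hw, hcost', funext₂ fun e x => ?_⟩
  have htax := hG.2.2 e x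
  dsimp only at htax
  rw [htax, hcost']
  exact h (w e) (hw e) x

theorem PoA_le (h : Linearizes m b T T') : PoA n m b T' ≤ PoA n m b T := by
  refine iSup_le fun G => iSup_le fun ⟨hG, hpos⟩ => iSup₂_le fun a ha => ?_
  rcases G with ⟨K, R, act, hne, cost, tax⟩
  obtain ⟨w, hw, rfl, rfl⟩ := h.exists_weights hG
  exact ofReal_SC_div_minCost_le_PoA_of_weights hw hG.1 hpos ha

theorem PoS_le (h : Linearizes m b T T') : PoS n m b T' ≤ PoS n m b T := by
  refine iSup_le fun G => iSup_le fun ⟨hG, hpos⟩ => ?_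
  rcases G with ⟨K, R, act, hne, cost, tax⟩
  obtain ⟨w, hw, rfl, rfl⟩ := h.exists_weights hG
  exact le_PoS_of_weights hw hG.1 hpos

end Linearizes

theorem Dominates.of_PoA_le_of_PoS_le {n m : ℕ} {b : Fin m → ℕ → ℝ} {T T' Tlin : Mech}
    (hPoA : PoA n m b T' ≤ PoA n m b T) (hPoS : PoS n m b T' ≤ PoS n m b T)
    (h : Dominates n m b T Tlin) : Dominates n m b T' Tlin :=
  ⟨hPoA.trans h.1, hPoS.trans h.2.1, h.2.2.imp hPoA.trans_lt hPoS.trans_lt⟩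

theorem linear_mechanisms_are_pareto_optimal_general
    (n m : ℕ) (b : Fin m → ℕ → ℝ) :
    (∀ T T' : Mech,
      (∀ α : Fin m → ℝ, (∀ j, 0 ≤ α j) →
        ∀ x, T' (fun y => ∑ j, α j * b j y) x = ∑ j, α j * T (b j) x) →
      PoA n m b T' ≤ PoA n m b T ∧ PoS n m b T' ≤ PoS n m b T) ∧
    ((∀ T : Mech, ∃ T' : Mech,
        ∀ α : Fin m → ℝ, (∀ j, 0 ≤ α j) →
          ∀ x, T' (fun y => ∑ j, α j * b j y) x = ∑ j, α j * T (b j) x) →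
      ∀ Tlin : Mech, IsLinear m b Tlin →
        (∀ T : Mech, IsLinear m b T → ¬ Dominates n m b T Tlin) →
        ∀ T : Mech, ¬ Dominates n m b T Tlin) := by
  refine ⟨fun T T' h => ⟨Linearizes.PoA_le h, Linearizes.PoS_le h⟩,
    fun hex Tlin _ hopt T hdom => ?_⟩
  obtain ⟨T', hT'⟩ := hex T
  exact hopt T' (Linearizes.isLinear hT')
    (hdom.of_PoA_le_of_PoS_le (Linearizes.PoA_le hT') (Linearizes.PoS_le hT'))

/-- Over congestion games with at most `n` users and costs
generated by convex, nondecreasing basis functions: for every local mechanism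
`T`, the linear mechanism `T'` defined by `T'(Σ α_j b_j) = Σ α_j T(b_j)`
satisfies `PoA(T') ≤ PoA(T)` and `PoS(T') ≤ PoS(T)`; consequently (assuming
each mechanism admits such a linearization), any mechanism that is Pareto
optimal among linear local mechanisms is Pareto optimal among all local
mechanisms. -/
theorem linear_mechanisms_are_pareto_optimal
    (n m : ℕ) (b : Fin m → ℕ → ℝ)
    (hb0 : ∀ j, b j 0 = 0)
    (hbmono : ∀ j, ∀ x : ℕ, 1 ≤ x → x < n → b j x ≤ b j (x + 1))
    (hbconv : ∀ j, ∀ x : ℕ, 1 ≤ x → x + 1 ≤ n →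
      b j x - b j (x - 1) ≤ b j (x + 1) - b j x) :
    (∀ T T' : Mech,
      (∀ α : Fin m → ℝ, (∀ j, 0 ≤ α j) →
        ∀ x, T' (fun y => ∑ j, α j * b j y) x = ∑ j, α j * T (b j) x) →
      PoA n m b T' ≤ PoA n m b T ∧ PoS n m b T' ≤ PoS n m b T) ∧
    ((∀ T : Mech, ∃ T' : Mech,
        ∀ α : Fin m → ℝ, (∀ j, 0 ≤ α j) →
          ∀ x, T' (fun y => ∑ j, α j * b j y) x = ∑ j, α j * T (b j) x) →
      ∀ Tlin : Mech, IsLinear m b Tlin →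
        (∀ T : Mech, IsLinear m b T → ¬ Dominates n m b T Tlin) →
        ∀ T : Mech, ¬ Dominates n m b T Tlin) :=
  linear_mechanisms_are_pareto_optimal_general n m b
end
end
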